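/- arXiv:1105.3399 — 2 statements merged into one kernel-verified Lean document; each statement's English description precedes it below -/
import Mathlib

section
/- For every real number k > 0 and every integer n ≥ 2, the integral over [-π, π] of ((4k+2)·cos(2(n−1)x) − cos(2(n−2)x) − cos(2nx))/(k + sin²x) with respect to x equals 0. -/
open Real

theorem cos_sub_two_mul_add_cos_add_two_mul (a x : ℝ) :
    cos (a - 2 * x) + cos (a + 2 * x) = 2 * cos a * (1 - 2 * sin x ^ 2) := by
  rw [cos_sub, cos_add, cos_two_mul_eq_one_sub]
  ring

theorem cos_combination_div_eq {k : ℝ} (a : ℝ) {x : ℝ} (hx : k + sin x ^ 2 ≠ 0) :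
    ((4 * k + 2) * cos a - cos (a - 2 * x) - cos (a + 2 * x)) / (k + sin x ^ 2) = 4 * cos a := by
  rw [sub_sub, cos_sub_two_mul_add_cos_add_two_mul, div_eq_iff hx]
  ring

theorem integral_cos_int_mul_eq_zero {m : ℤ} (hm : m ≠ 0) :
    ∫ x in (-π)..π, cos (m * x) = 0 := by
  rw [intervalIntegral.integral_comp_mul_left cos (Int.cast_ne_zero.mpr hm), integral_cos,
    mul_neg, sin_neg, sin_int_mul_pi]
  simp

theorem stmt_4 (k : ℝ) (hk : 0 < k) (n : ℤ) (hn : 2 ≤ n) :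
    ∫ x in (-π)..π,
        ((4 * k + 2) * Real.cos (2 * (n - 1) * x) - Real.cos (2 * (n - 2) * x)
          - Real.cos (2 * n * x)) / (k + Real.sin x ^ 2) = 0 := by
  have integrand_eq (x : ℝ) :
      ((4 * k + 2) * cos (2 * (n - 1) * x) - cos (2 * (n - 2) * x) - cos (2 * n * x))
        / (k + sin x ^ 2) = 4 * cos (((2 * (n - 1) : ℤ) : ℝ) * x) := by
    have hshift : (2 : ℝ) * (n - 2) * x = 2 * (n - 1) * x - 2 * x ∧
        (2 : ℝ) * n * x = 2 * (n - 1) * x + 2 * x := by constructor <;> ring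
    rw [hshift.1, hshift.2, cos_combination_div_eq _ (by positivity)]
    push_cast
    rfl
  simp only [integrand_eq, intervalIntegral.integral_const_mul,
    integral_cos_int_mul_eq_zero (show 2 * (n - 1) ≠ 0 by lia), mul_zero]
end

section
/- Fix a real number k > 0. For every natural number n, the integral over [-π, π] of cos(2nx)/(k + sin²x) with respect to x equals π·(−y(n) + z(n)·2/√(k(k+1))), where y and z are the sequences defined by y(0) = 0, y(1) = 4, y(n) = (4k+2)·y(n−1) − y(n−2), and z(0) = 1, z(1) = 2k+1, z(n) = (4k+2)·z(n−1) − z(n−2). -/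
open Real intervalIntegral

/-!
Write `I n` for the integral. Since `cos 2x = (2k + 1) - 2 (k + sin² x)`, multiplying the
numerator by `cos 2x` costs a factor `2k + 1` and an integral of the numerator alone, which
vanishes for `cos (2(n+1)x)`. With `cos (2(n+2)x) + cos (2nx) = 2 cos (2(n+1)x) cos 2x` this gives
`I (n+2) = (4k+2) I (n+1) - I n` and `I 1 = (2k+1) I 0 - 4π`, the recurrence of the right-hand
side, and `I 0 = 2π / √(k(k+1))` comes from an explicit antiderivative.
-/

theorem eq_of_linear_recurrence {R : Type*} [Ring R] {a b : ℕ → R} (p q : R)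
    (ha : ∀ n, a (n + 2) = p * a (n + 1) + q * a n)
    (hb : ∀ n, b (n + 2) = p * b (n + 1) + q * b n)
    (h0 : a 0 = b 0) (h1 : a 1 = b 1) : a = b := by
  funext n
  induction n using Nat.twoStepInduction with
  | zero => exact h0
  | one => exact h1
  | more n ih₀ ih₁ => rw [ha, hb, ih₀, ih₁]

/- On `(-π/2, π/2)` this is `arctan ((s/k) tan x) / s` rewritten through
`arctan a - arctan b = arctan ((a - b) / (1 + a b))` with `b = tan x`; unlike that, it is
continuous on all of `ℝ`. -/
theorem hasDerivAt_antideriv_one_div_add_sin_sq {k s : ℝ} (hk : 0 < k) (hs : 0 < s)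
    (hs2 : s ^ 2 = k * (k + 1)) (x : ℝ) :
    HasDerivAt
      (fun x => (x + arctan ((s - k) * sin (2 * x) / (s + k - (s - k) * cos (2 * x)))) / s)
      (1 / (k + sin x ^ 2)) x := by
  have hD : 0 < s + k - (s - k) * cos (2 * x) := by
    nlinarith [cos_le_one (2 * x), neg_one_le_cos (2 * x), mul_pos hk hs]
  have h2 : HasDerivAt (fun x : ℝ => 2 * x) 2 x := by
    simpa using (hasDerivAt_id x).const_mul (2 : ℝ)
  have hN := ((hasDerivAt_sin _).comp x h2).const_mul (s - k)
  have hDen := ((hasDerivAt_cos _).comp x h2).const_mul (s - k) |>.const_sub (s + k)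
  refine (((hasDerivAt_id x).add ((hN.div hDen hD.ne').arctan)).div_const s).congr_deriv ?_
  simp only [Function.comp_apply, Pi.div_apply]
  have hkt : k + sin x ^ 2 ≠ 0 := by positivity
  field_simp
  rw [sin_sq_eq_half_sub x]
  linear_combination (-(s - k) ^ 2 * (2 * k + 1 - cos (2 * x)) / 2 - s * (s - k) ^ 2) *
    sin_sq_add_cos_sq (2 * x) - 2 * s * (1 - cos (2 * x)) * hs2

theorem continuous_div_add_sin_sq {k : ℝ} (hk : 0 < k) {g : ℝ → ℝ} (hg : Continuous g) :
    Continuous fun x => g x / (k + sin x ^ 2) :=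
  hg.div (by fun_prop) fun x => by positivity

theorem integral_one_div_add_sin_sq {k : ℝ} (hk : 0 < k) :
    ∫ x in (-π)..π, 1 / (k + sin x ^ 2) = 2 * π / √(k * (k + 1)) := by
  have hs : 0 < √(k * (k + 1)) := by positivity
  have hs2 : √(k * (k + 1)) ^ 2 = k * (k + 1) := sq_sqrt (by positivity)
  rw [integral_eq_sub_of_hasDerivAt
    (fun x _ => hasDerivAt_antideriv_one_div_add_sin_sq hk hs hs2 x)
    ((continuous_div_add_sin_sq hk continuous_const).intervalIntegrable _ _)]
  simp only [sin_two_pi, mul_zero, cos_two_pi, mul_one, add_sub_sub_cancel, zero_div, arctan_zero,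
    add_zero, mul_neg, sin_neg, neg_zero, cos_neg]
  ring

theorem integral_cos_nat_mul_eq_zero {n : ℕ} (hn : n ≠ 0) :
    ∫ x in (-π)..π, cos (n * x) = 0 := by
  rw [integral_comp_mul_left (fun x => cos x) (Nat.cast_ne_zero.2 hn), integral_cos]
  simp [mul_neg, sin_nat_mul_pi]

theorem integral_mul_cos_two_mul_div_add_sin_sq {k : ℝ} (hk : 0 < k) {g : ℝ → ℝ}
    (hg : Continuous g) (a b : ℝ) :
    ∫ x in a..b, g x * cos (2 * x) / (k + sin x ^ 2) =
      (2 * k + 1) * (∫ x in a..b, g x / (k + sin x ^ 2)) - 2 * ∫ x in a..b, g x := by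
  have h (x : ℝ) : g x * cos (2 * x) / (k + sin x ^ 2) =
      (2 * k + 1) * (g x / (k + sin x ^ 2)) - 2 * g x := by
    have : k + sin x ^ 2 ≠ 0 := by positivity
    rw [cos_two_mul, cos_sq']
    field_simp
    ring
  simp_rw [h]
  rw [integral_sub, integral_const_mul, integral_const_mul]
  · exact ((continuous_div_add_sin_sq hk hg).intervalIntegrable _ _).const_mul _
  · exact (hg.intervalIntegrable _ _).const_mul _

noncomputable def cosDivIntegral (k : ℝ) (n : ℕ) : ℝ :=
  ∫ x in (-π)..π, cos (2 * n * x) / (k + sin x ^ 2)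

theorem cosDivIntegral_zero {k : ℝ} (hk : 0 < k) :
    cosDivIntegral k 0 = 2 * π / √(k * (k + 1)) := by
  simpa [cosDivIntegral] using integral_one_div_add_sin_sq hk

theorem cosDivIntegral_one {k : ℝ} (hk : 0 < k) :
    cosDivIntegral k 1 = (2 * k + 1) * cosDivIntegral k 0 - 4 * π := by
  have h := integral_mul_cos_two_mul_div_add_sin_sq hk continuous_const (-π) π (g := fun _ => 1)
  simp only [one_mul, integral_const, smul_eq_mul] at h
  simp only [cosDivIntegral, Nat.cast_one, mul_one, CharP.cast_eq_zero, mul_zero, zero_mul, cos_zero,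
    h, one_div]
  ring

theorem cosDivIntegral_add_two {k : ℝ} (hk : 0 < k) (n : ℕ) :
    cosDivIntegral k (n + 2) = (4 * k + 2) * cosDivIntegral k (n + 1) - cosDivIntegral k n := by
  have hcos (x : ℝ) : cos (2 * (n + 2 : ℕ) * x) / (k + sin x ^ 2) =
      2 * (cos (2 * (n + 1 : ℕ) * x) * cos (2 * x) / (k + sin x ^ 2)) -
        cos (2 * n * x) / (k + sin x ^ 2) := by
    have e₁ : 2 * ((n + 2 : ℕ) : ℝ) * x = 2 * (n + 1 : ℕ) * x + 2 * x := by push_cast; ring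
    have e₂ : 2 * (n : ℝ) * x = 2 * (n + 1 : ℕ) * x - 2 * x := by push_cast; ring
    rw [e₁, e₂, cos_add, cos_sub]
    ring
  have hcont : Continuous fun x => cos (2 * (n + 1 : ℕ) * x) := by fun_prop
  have hzero : ∫ x in (-π)..π, cos (2 * (n + 1 : ℕ) * x) = 0 := by
    simpa [mul_assoc] using integral_cos_nat_mul_eq_zero (n := 2 * (n + 1)) (by omega)
  simp only [cosDivIntegral]
  rw [integral_congr fun x _ => hcos x, integral_sub, integral_const_mul,
    integral_mul_cos_two_mul_div_add_sin_sq hk hcont, hzero]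
  · ring
  · exact ((continuous_div_add_sin_sq hk (by fun_prop)).intervalIntegrable _ _).const_mul _
  · exact (continuous_div_add_sin_sq hk (by fun_prop)).intervalIntegrable _ _

theorem stmt_7 (k : ℝ) (hk : 0 < k) (y z : ℕ → ℝ)
    (hy0 : y 0 = 0) (hy1 : y 1 = 4)
    (hy : ∀ n, y (n + 2) = (4 * k + 2) * y (n + 1) - y n)
    (hz0 : z 0 = 1) (hz1 : z 1 = 2 * k + 1)
    (hz : ∀ n, z (n + 2) = (4 * k + 2) * z (n + 1) - z n) :
    ∀ n : ℕ,
      ∫ x in (-π)..π, Real.cos (2 * n * x) / (k + Real.sin x ^ 2)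
        = π * (-y n + z n * 2 / Real.sqrt (k * (k + 1))) := by
  refine congrFun (eq_of_linear_recurrence (a := cosDivIntegral k) (4 * k + 2) (-1) ?_ ?_ ?_ ?_)
  · intro n
    rw [cosDivIntegral_add_two hk]
    ring
  · intro n
    rw [hy, hz]
    ring
  · rw [cosDivIntegral_zero hk, hy0, hz0]
    ring
  · rw [cosDivIntegral_one hk, cosDivIntegral_zero hk, hy1, hz1]
    ring
end
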